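/- arXiv:0812.3920 — 3 statements merged into one kernel-verified Lean document; each statement's English description precedes it below -/
import Mathlib

section
/- For an integer s ≥ 2, the single zeta value ζ(s) equals the iterated integral ∫_{1 > t₁ > t₂ > … > t_s > 0} (dt₁/t₁)(dt₂/t₂)⋯(dt_{s-1}/t_{s-1})(dt_s/(1-t_s)); that is, ζ(s) = ∫_{Δ} Π_{i=1}^{s-1} (1/t_i) · (1/(1-t_s)) dt₁⋯dt_s where Δ = {(t₁,…,t_s) : 1 > t₁ > … > t_s > 0}. -/
/-!
For `0 < t < 1` we have `(1 - t)⁻¹ = ∑ₙ tⁿ`, so by monotone convergence the integral is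
`∑ₙ ∫_Δ t_s ^ (n + 1) ∏ᵢ tᵢ⁻¹ dt`. Integrating out the largest coordinate `t₁ = a` of the simplex
`x > t₁ > ⋯ > t_k > 0` gives, by induction on `k`, the value
`∫₀ˣ a⁻¹ · a ^ (n + 1) / (n + 1) ^ (k - 1) da = x ^ (n + 1) / (n + 1) ^ k`,
so the `n`-th term is `1 / (n + 1) ^ s`.
-/

open MeasureTheory Set
open scoped ENNReal

def orderedSimplex (s : ℕ) (x : ℝ) : Set (Fin s → ℝ) :=
  {t | (∀ i, 0 < t i) ∧ (∀ i, t i < x) ∧ StrictAnti t}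

theorem measurableSet_orderedSimplex (s : ℕ) (x : ℝ) : MeasurableSet (orderedSimplex s x) := by
  simp only [orderedSimplex, StrictAnti, measurableSet_setOfPred]
  fun_prop

theorem cons_mem_orderedSimplex {m : ℕ} {x a : ℝ} {y : Fin m → ℝ} :
    Fin.cons a y ∈ orderedSimplex (m + 1) x ↔ a ∈ Ioo 0 x ∧ y ∈ orderedSimplex m a := by
  have hanti : StrictAnti (Fin.cons a y : Fin (m + 1) → ℝ) ↔ (∀ j, y j < a) ∧ StrictAnti y :=
    Fin.liftFun_cons (· > ·)
  simp only [orderedSimplex, mem_ofPred_eq, Fin.forall_fin_succ, Fin.cons_zero, Fin.cons_succ,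
    mem_Ioo, hanti]
  constructor
  · rintro ⟨⟨ha, hy⟩, ⟨hax, -⟩, hya, hy_anti⟩
    exact ⟨⟨ha, hax⟩, hy, hya, hy_anti⟩
  · rintro ⟨⟨ha, hax⟩, hy, hya, hy_anti⟩
    exact ⟨⟨ha, hy⟩, ⟨hax, fun i => (hya i).trans hax⟩, hya, hy_anti⟩

theorem lintegral_orderedSimplex_succ (m : ℕ) (x : ℝ) {f : (Fin (m + 1) → ℝ) → ℝ≥0∞}
    (hf : Measurable f) :
    ∫⁻ t in orderedSimplex (m + 1) x, f t =
      ∫⁻ a in Ioo 0 x, ∫⁻ y in orderedSimplex m a, f (Fin.cons a y) := by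
  set e := (MeasurableEquiv.piFinSuccAbove (fun _ : Fin (m + 1) => ℝ) 0).symm
  have he : ∀ z, e z = Fin.cons z.1 z.2 := fun _ => by
    simp [e, MeasurableEquiv.piFinSuccAbove_symm_apply, Fin.insertNthEquiv]
  have hmeas : Measurable fun z => (orderedSimplex (m + 1) x).indicator f (e z) :=
    (hf.indicator (measurableSet_orderedSimplex _ _)).comp e.measurable
  rw [← lintegral_indicator (measurableSet_orderedSimplex _ _),
    ← (volume_preserving_piFinSuccAbove (fun _ => ℝ) 0).symm.lintegral_comp_emb
      e.measurableEmbedding, Measure.volume_eq_prod, lintegral_prod _ hmeas.aemeasurable,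
    ← lintegral_indicator measurableSet_Ioo]
  congr 1 with a
  by_cases ha : a ∈ Ioo 0 x
  · rw [indicator_of_mem ha, ← lintegral_indicator (measurableSet_orderedSimplex _ _)]
    congr 1 with y
    by_cases hy : y ∈ orderedSimplex m a <;> simp [he, hy, ha, cons_mem_orderedSimplex]
  · rw [indicator_of_notMem ha]
    simp [he, ha, cons_mem_orderedSimplex]

theorem lintegral_Ioo_pow (n : ℕ) {x : ℝ} (hx : 0 ≤ x) :
    ∫⁻ a in Ioo 0 x, ENNReal.ofReal (a ^ n) = ENNReal.ofReal (x ^ (n + 1) / (n + 1)) := by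
  rw [← ofReal_integral_eq_lintegral_ofReal, ← integral_Ioc_eq_integral_Ioo,
    ← intervalIntegral.integral_of_le hx, integral_pow, zero_pow n.succ_ne_zero, sub_zero]
  · exact (continuous_pow n).integrableOn_Icc.mono_set Ioo_subset_Icc_self
  · exact ae_restrict_of_forall_mem measurableSet_Ioo fun a ha => pow_nonneg ha.1.le n

theorem lintegral_orderedSimplex_prod_inv_mul_pow (m n : ℕ) {x : ℝ} (hx : 0 ≤ x) :
    ∫⁻ t in orderedSimplex (m + 1) x,
        ENNReal.ofReal ((∏ i, (t i)⁻¹) * t (Fin.last m) ^ (n + 1)) =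
      ENNReal.ofReal (x ^ (n + 1) / (n + 1) ^ (m + 1)) := by
  induction m using Nat.strong_induction_on generalizing x with | _ m ih => ?_
  suffices inner : ∀ a ∈ Ioo 0 x, ∫⁻ y in orderedSimplex m a,
      ENNReal.ofReal ((∏ i, ((Fin.cons a y : Fin (m + 1) → ℝ) i)⁻¹) *
        (Fin.cons a y : Fin (m + 1) → ℝ) (Fin.last m) ^ (n + 1)) =
      ENNReal.ofReal (a ^ n) * ENNReal.ofReal (((n : ℝ) + 1) ^ m)⁻¹ by
    rw [lintegral_orderedSimplex_succ _ _ (by fun_prop),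
      setLIntegral_congr_fun measurableSet_Ioo inner, lintegral_mul_const _ (by fun_prop),
      lintegral_Ioo_pow n hx, ← ENNReal.ofReal_mul (by positivity)]
    congr 1
    field_simp
    ring
  intro a ha
  rcases m with _ | k
  · have h1 : orderedSimplex 0 a = univ :=
      eq_univ_of_forall fun y => ⟨finZeroElim, finZeroElim, fun i => i.elim0⟩
    simp only [h1, Measure.restrict_univ, Fin.prod_univ_succ, Fin.prod_univ_zero, mul_one,
      Fin.last_zero, Fin.cons_zero, lintegral_const, volume_pi, Measure.pi_empty_univ, pow_zero,
      inv_one, ENNReal.ofReal_one]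
    rw [pow_succ', inv_mul_cancel_left₀ ha.1.ne']
  · have hcons : ∀ y : Fin (k + 1) → ℝ,
        ENNReal.ofReal ((∏ i, ((Fin.cons a y : Fin (k + 2) → ℝ) i)⁻¹) *
          (Fin.cons a y : Fin (k + 2) → ℝ) (Fin.last (k + 1)) ^ (n + 1)) =
        ENNReal.ofReal a⁻¹ * ENNReal.ofReal ((∏ i, (y i)⁻¹) * y (Fin.last k) ^ (n + 1)) := by
      intro y
      simp only [Fin.prod_univ_succ, ← Fin.succ_last, Fin.cons_zero, Fin.cons_succ]
      rw [← ENNReal.ofReal_mul (inv_nonneg.2 ha.1.le), mul_assoc]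
    simp_rw [hcons]
    rw [lintegral_const_mul' _ _ ENNReal.ofReal_ne_top, ih k k.lt_succ_self ha.1.le,
      ← ENNReal.ofReal_mul (inv_nonneg.2 ha.1.le), pow_succ', mul_div_assoc,
      inv_mul_cancel_left₀ ha.1.ne', div_eq_mul_inv, ENNReal.ofReal_mul (pow_nonneg ha.1.le n)]

theorem hasSum_prod_inv_mul_pow {ι : Type*} [Fintype ι] [DecidableEq ι] {t : ι → ℝ} {c : ι}
    (hc₀ : 0 < t c) (hc₁ : t c < 1) :
    HasSum (fun n : ℕ => (∏ i, (t i)⁻¹) * t c ^ (n + 1))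
      ((∏ i ∈ Finset.univ.erase c, (t i)⁻¹) * (1 - t c)⁻¹) := by
  have hprod : (∏ i, (t i)⁻¹) * t c = ∏ i ∈ Finset.univ.erase c, (t i)⁻¹ := by
    rw [← Finset.mul_prod_erase _ _ (Finset.mem_univ c), mul_comm,
      mul_inv_cancel_left₀ hc₀.ne']
  simpa only [pow_succ', ← mul_assoc, hprod] using
    (hasSum_geometric_of_lt_one hc₀.le hc₁).mul_left (∏ i ∈ Finset.univ.erase c, (t i)⁻¹)

theorem lintegral_orderedSimplex_eq_tsum (m : ℕ) :
    ∫⁻ t in orderedSimplex (m + 1) 1, ENNReal.ofReal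
        ((∏ i ∈ Finset.univ.erase (Fin.last m), (t i)⁻¹) * (1 - t (Fin.last m))⁻¹) =
      ∑' n : ℕ, ENNReal.ofReal (1 / ((n : ℝ) + 1) ^ (m + 1)) := by
  have expand : ∀ t ∈ orderedSimplex (m + 1) 1, ENNReal.ofReal
      ((∏ i ∈ Finset.univ.erase (Fin.last m), (t i)⁻¹) * (1 - t (Fin.last m))⁻¹) =
        ∑' n : ℕ, ENNReal.ofReal ((∏ i, (t i)⁻¹) * t (Fin.last m) ^ (n + 1)) := by
    rintro t ⟨hpos, hlt, -⟩
    have hsum := hasSum_prod_inv_mul_pow (hpos (Fin.last m)) (hlt (Fin.last m))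
    have hterm (n : ℕ) : 0 ≤ (∏ i, (t i)⁻¹) * t (Fin.last m) ^ (n + 1) :=
      mul_nonneg (Finset.prod_nonneg fun i _ => inv_nonneg.2 (hpos i).le)
        (pow_nonneg (hpos _).le _)
    rw [← hsum.tsum_eq, ENNReal.ofReal_tsum_of_nonneg hterm hsum.summable]
  rw [setLIntegral_congr_fun (measurableSet_orderedSimplex _ _) expand,
    lintegral_tsum fun n => by fun_prop]
  congr 1 with n
  rw [lintegral_orderedSimplex_prod_inv_mul_pow m n zero_le_one, one_pow]

/-- **`ζ(s)` as an iterated integral.** For an integer `s ≥ 2`,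
`ζ(s) = ∫_{1 > t₁ > … > t_s > 0} (dt₁/t₁)⋯(dt_{s-1}/t_{s-1}) (dt_s/(1-t_s))`. -/
theorem zeta_eq_iterated_integral (s : ℕ) (hs : 2 ≤ s) :
    (∫ t in {t : Fin s → ℝ | (∀ i, 0 < t i) ∧ (∀ i, t i < 1) ∧
        (∀ i j : Fin s, i < j → t j < t i)},
      (∏ i ∈ Finset.univ.erase (⟨s - 1, by omega⟩ : Fin s), (t i)⁻¹) *
        (1 - t ⟨s - 1, by omega⟩)⁻¹) =
    ∑' n : ℕ+, (1 : ℝ) / (n : ℝ) ^ s := by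
  obtain ⟨m, rfl⟩ : ∃ m, s = m + 1 := ⟨s - 1, by omega⟩
  change ∫ t in orderedSimplex (m + 1) 1,
    (∏ i ∈ Finset.univ.erase (Fin.last m), (t i)⁻¹) * (1 - t (Fin.last m))⁻¹ = _
  have hnonneg : ∀ t ∈ orderedSimplex (m + 1) 1,
      0 ≤ (∏ i ∈ Finset.univ.erase (Fin.last m), (t i)⁻¹) * (1 - t (Fin.last m))⁻¹ :=
    fun t ⟨hpos, hlt, _⟩ => mul_nonneg (Finset.prod_nonneg fun i _ => inv_nonneg.2 (hpos i).le)
      (inv_nonneg.2 (sub_nonneg.2 (hlt _).le))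
  have hsummable : Summable fun n : ℕ => 1 / ((n : ℝ) + 1) ^ (m + 1) := by
    simpa using (summable_nat_add_iff 1).2 (Real.summable_one_div_nat_pow.2 hs)
  rw [integral_eq_lintegral_of_nonneg_ae
      (ae_restrict_of_forall_mem (measurableSet_orderedSimplex _ _) hnonneg) (by fun_prop),
    lintegral_orderedSimplex_eq_tsum,
    ← ENNReal.ofReal_tsum_of_nonneg (fun n => by positivity) hsummable,
    ENNReal.toReal_ofReal (tsum_nonneg fun n => by positivity),
    tsum_pnat_eq_tsum_succ (f := fun n : ℕ => 1 / (n : ℝ) ^ (m + 1))]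
  simp only [Nat.cast_add, Nat.cast_one]
end

section
/- Over a finite field 𝔽_q with q odd, the number of symmetric n×n matrices of rank r = 2s over 𝔽_q equals Π_{i=1}^{s} q^{2i}/(q^{2i}−1) · Π_{i=0}^{2s−1} (q^{n−i} − 1). -/
/-!
Bordering a symmetric `n × n` matrix `C` of rank `k` to `[[C, b], [bᵀ, a]]` raises the rank by `2`
when `b` is outside the column space of `C`; when `b = C y` it raises the rank by `0` or `1`
according as `a = yᵀ C y` or not. The `q ^ k` vectors `b` in the column space and the
`q ^ n - q ^ k` outside it thus express the number of symmetric `(n + 1) × (n + 1)` matrices of each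
rank through those of size `n`, and MacWilliams' product formula satisfies the same recurrence and
the same initial values.
-/

open Matrix Module

namespace Matrix

section AdjoinColumn

variable {F : Type*} [Field F] {m n : Type*} [Fintype n]

theorem range_mulVecLin_fromCols_replicateCol (A : Matrix m n F) (v : m → F) :
    LinearMap.range (fromCols A (replicateCol (Fin 1) v)).mulVecLin =
      LinearMap.range A.mulVecLin ⊔ Submodule.span F {v} := by
  have hcol : (fromCols A (replicateCol (Fin 1) v)).col = Sum.elim A.col fun _ => v := by
    ext (j | j) i <;> rfl
  rw [range_mulVecLin, range_mulVecLin, hcol, Set.Sum.elim_range, Submodule.span_union,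
    Set.range_const]

theorem rank_fromCols_replicateCol_of_mem (A : Matrix m n F) {v : m → F}
    (hv : v ∈ LinearMap.range A.mulVecLin) :
    (fromCols A (replicateCol (Fin 1) v)).rank = A.rank := by
  rw [rank, range_mulVecLin_fromCols_replicateCol,
    sup_eq_left.mpr ((Submodule.span_singleton_le_iff_mem _ _).mpr hv), rank]

theorem rank_fromCols_replicateCol_of_notMem [Finite m] (A : Matrix m n F) {v : m → F}
    (hv : v ∉ LinearMap.range A.mulVecLin) :
    (fromCols A (replicateCol (Fin 1) v)).rank = A.rank + 1 := by
  rw [rank, range_mulVecLin_fromCols_replicateCol, Submodule.finrank_sup_span_singleton hv, rank]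

end AdjoinColumn

section Border

variable {α : Type*} {m : Type*}

def border (C : Matrix m m α) (b : m → α) (a : α) : Matrix (m ⊕ Fin 1) (m ⊕ Fin 1) α :=
  fromBlocks C (replicateCol (Fin 1) b) (replicateRow (Fin 1) b) (of fun _ _ => a)

theorem IsSymm.border {C : Matrix m m α} (hC : C.IsSymm) (b : m → α) (a : α) :
    (C.border b a).IsSymm := by
  rw [Matrix.border, IsSymm, fromBlocks_transpose, transpose_replicateCol, transpose_replicateRow,
    hC.eq]
  rfl

theorem border_eq_fromCols (C : Matrix m m α) (b : m → α) (a : α) :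
    C.border b a = fromCols (fromRows C (replicateRow (Fin 1) b))
      (replicateCol (Fin 1) (Sum.elim b fun _ => a)) := by
  ext (i | i) (j | j) <;> rfl

theorem IsSymm.border_toBlocks {A : Matrix (m ⊕ Fin 1) (m ⊕ Fin 1) α} (hA : A.IsSymm) :
    A.toBlocks₁₁.border (fun i => A (.inl i) (.inr 0)) (A (.inr 0) (.inr 0)) = A := by
  ext (i | i) (j | j)
  · rfl
  · rw [Subsingleton.elim j 0]; rfl
  · rw [Subsingleton.elim i 0]; exact hA.apply (.inr 0) (.inl j)
  · rw [Subsingleton.elim i 0, Subsingleton.elim j 0]; rfl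

def symmBorderEquiv :
    {C : Matrix m m α // C.IsSymm} × (m → α) × α ≃
      {A : Matrix (m ⊕ Fin 1) (m ⊕ Fin 1) α // A.IsSymm} where
  toFun x := ⟨x.1.1.border x.2.1 x.2.2, x.1.2.border _ _⟩
  invFun A := (⟨A.1.toBlocks₁₁, IsSymm.ext fun i j => A.2.apply (.inl i) (.inl j)⟩,
    fun i => A.1 (.inl i) (.inr 0), A.1 (.inr 0) (.inr 0))
  left_inv _ := rfl
  right_inv A := Subtype.ext A.2.border_toBlocks

variable {F : Type*} [Field F] [Fintype m] {C : Matrix m m F}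

theorem IsSymm.dotProduct_mulVec_comm (hC : C.IsSymm) (x y : m → F) :
    x ⬝ᵥ C *ᵥ y = y ⬝ᵥ C *ᵥ x := by
  rw [dotProduct_mulVec, ← mulVec_transpose, hC.eq, dotProduct_comm]

theorem IsSymm.rank_fromRows_replicateRow (hC : C.IsSymm) (b : m → F) :
    (fromRows C (replicateRow (Fin 1) b)).rank = (fromCols C (replicateCol (Fin 1) b)).rank := by
  rw [← rank_transpose, transpose_fromRows, transpose_replicateRow, hC.eq]

theorem elim_mem_range_fromRows_replicateRow_iff (b : m → F) (a : F) :
    Sum.elim b (fun _ => a) ∈ LinearMap.range (fromRows C (replicateRow (Fin 1) b)).mulVecLin ↔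
      ∃ x, C *ᵥ x = b ∧ b ⬝ᵥ x = a := by
  simp [fromRows_mulVec, replicateRow_mulVec_eq_const, funext_iff]

theorem IsSymm.rank_border_of_notMem (hC : C.IsSymm) {b : m → F}
    (hb : b ∉ LinearMap.range C.mulVecLin) (a : F) : (C.border b a).rank = C.rank + 2 := by
  rw [border_eq_fromCols, rank_fromCols_replicateCol_of_notMem, hC.rank_fromRows_replicateRow,
    rank_fromCols_replicateCol_of_notMem _ hb]
  rw [elim_mem_range_fromRows_replicateRow_iff]
  rintro ⟨x, hx, -⟩
  exact hb ⟨x, hx⟩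

theorem IsSymm.elim_mem_range_fromRows_replicateRow_mulVec_iff (hC : C.IsSymm) (y : m → F)
    (a : F) :
    Sum.elim (C *ᵥ y) (fun _ => a) ∈
        LinearMap.range (fromRows C (replicateRow (Fin 1) (C *ᵥ y))).mulVecLin ↔
      a = y ⬝ᵥ C *ᵥ y := by
  rw [elim_mem_range_fromRows_replicateRow_iff]
  constructor
  · rintro ⟨x, hx, rfl⟩
    rw [dotProduct_comm, hC.dotProduct_mulVec_comm, hx]
  · rintro rfl
    exact ⟨y, rfl, dotProduct_comm _ _⟩

theorem IsSymm.rank_fromRows_replicateRow_mulVec (hC : C.IsSymm) (y : m → F) :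
    (fromRows C (replicateRow (Fin 1) (C *ᵥ y))).rank = C.rank := by
  rw [hC.rank_fromRows_replicateRow, rank_fromCols_replicateCol_of_mem _ (v := C *ᵥ y) ⟨y, rfl⟩]

theorem IsSymm.rank_border_mulVec_self (hC : C.IsSymm) (y : m → F) :
    (C.border (C *ᵥ y) (y ⬝ᵥ C *ᵥ y)).rank = C.rank := by
  rw [border_eq_fromCols, rank_fromCols_replicateCol_of_mem _
    ((hC.elim_mem_range_fromRows_replicateRow_mulVec_iff y _).mpr rfl),
    hC.rank_fromRows_replicateRow_mulVec]

theorem IsSymm.rank_border_mulVec_of_ne (hC : C.IsSymm) (y : m → F) {a : F}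
    (ha : a ≠ y ⬝ᵥ C *ᵥ y) : (C.border (C *ᵥ y) a).rank = C.rank + 1 := by
  rw [border_eq_fromCols, rank_fromCols_replicateCol_of_notMem _
    (mt (hC.elim_mem_range_fromRows_replicateRow_mulVec_iff y a).mp ha),
    hC.rank_fromRows_replicateRow_mulVec]

end Border

section CountBorders

variable {F : Type*} [Field F] [Fintype F] {m : Type*} [Fintype m] {R : Type*} [CommRing R]

theorem IsSymm.sum_rank_border_of_mem {C : Matrix m m F} (hC : C.IsSymm) {b : m → F}
    (hb : b ∈ LinearMap.range C.mulVecLin) (g : ℕ → R) :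
    ∑ a, g (C.border b a).rank = g C.rank + (Fintype.card F - 1) * g (C.rank + 1) := by
  classical
  obtain ⟨y, rfl⟩ := hb
  have hsplit : ∀ a, g (C.border (C *ᵥ y) a).rank =
      g (C.rank + 1) + if a = y ⬝ᵥ C *ᵥ y then g C.rank - g (C.rank + 1) else 0 := by
    intro a
    split_ifs with ha
    · rw [ha, hC.rank_border_mulVec_self]
      ring
    · rw [hC.rank_border_mulVec_of_ne y ha, add_zero]
  simp only [mulVecLin_apply, hsplit, Finset.sum_add_distrib, Finset.sum_const, Finset.card_univ,
    Finset.sum_ite_eq', Finset.mem_univ, if_true, nsmul_eq_mul]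
  ring

theorem IsSymm.sum_rank_border_of_notMem {C : Matrix m m F} (hC : C.IsSymm) {b : m → F}
    (hb : b ∉ LinearMap.range C.mulVecLin) (g : ℕ → R) :
    ∑ a, g (C.border b a).rank = Fintype.card F * g (C.rank + 2) := by
  simp only [hC.rank_border_of_notMem hb, Finset.sum_const, Finset.card_univ, nsmul_eq_mul]

theorem IsSymm.sum_rank_border [DecidableEq m] {C : Matrix m m F} (hC : C.IsSymm) (g : ℕ → R) :
    ∑ p : (m → F) × F, g (C.border p.1 p.2).rank =
      Fintype.card F ^ C.rank * (g C.rank + (Fintype.card F - 1) * g (C.rank + 1)) +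
        (Fintype.card F ^ Fintype.card m - Fintype.card F ^ C.rank) * Fintype.card F *
          g (C.rank + 2) := by
  classical
  set V := LinearMap.range C.mulVecLin
  -- stated for every instance, since the sums below carry a classical one
  have hV : ∀ [Fintype V], Fintype.card V = Fintype.card F ^ C.rank := by
    intro _
    rw [Fintype.card_eq_nat_card, natCard_eq_pow_finrank (K := F), Nat.card_eq_fintype_card]
    rfl
  rw [Fintype.sum_prod_type, ← Fintype.sum_subtype_add_sum_subtype (· ∈ V)]
  simp only [fun b : {b // b ∈ V} => hC.sum_rank_border_of_mem b.2 g,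
    fun b : {b // b ∉ V} => hC.sum_rank_border_of_notMem b.2 g, Finset.sum_const,
    Finset.card_univ, nsmul_eq_mul, Fintype.card_subtype_compl, Fintype.card_fun, hV]
  rw [Nat.cast_sub (pow_le_pow_right₀ Fintype.card_pos C.rank_le_card_width)]
  push_cast
  ring

end CountBorders

end Matrix

open Finset

section SymmRankCount

variable (F : Type*) [Field F] [Fintype F]

noncomputable def symmRankCount (n r : ℕ) : ℕ :=
  Nat.card {A : Matrix (Fin n) (Fin n) F // A.IsSymm ∧ A.rank = r}

/-- The number of pairs `(b, a)` for which `[[C, b], [bᵀ, a]]` has rank `r`, when `C` is a symmetric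
`n × n` matrix of rank `k` over a field with `q` elements (see `Matrix.IsSymm.sum_rank_border`). -/
def borderCount {R : Type*} [CommRing R] (q : R) (n k r : ℕ) : R :=
  q ^ k * ((if k = r then 1 else 0) + (q - 1) * if k + 1 = r then 1 else 0) +
    (q ^ n - q ^ k) * q * if k + 2 = r then 1 else 0

variable {F}

theorem symmRankCount_zero_left (r : ℕ) :
    symmRankCount F 0 r = if r = 0 then 1 else 0 := by
  have hrank (A : Matrix (Fin 0) (Fin 0) F) : A.rank = 0 := Nat.le_zero.mp A.rank_le_width
  have hsymm (A : Matrix (Fin 0) (Fin 0) F) : A.IsSymm := Subsingleton.elim _ _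
  split_ifs with hr
  · simp only [symmRankCount, hrank, hsymm, hr, true_and]
    exact Nat.card_eq_one_iff_unique.mpr ⟨inferInstance, ⟨⟨0, trivial⟩⟩⟩
  · simp [symmRankCount, hrank, Ne.symm hr]

variable [DecidableEq F] {R : Type*} [CommRing R]

theorem symmRankCount_eq_sum (n r : ℕ) :
    (symmRankCount F n r : R) =
      ∑ A : {A : Matrix (Fin n) (Fin n) F // A.IsSymm}, if A.1.rank = r then 1 else 0 := by
  rw [symmRankCount, ← Nat.card_congr (Equiv.subtypeSubtypeEquivSubtypeInter _ _),
    Nat.card_eq_fintype_card, Fintype.card_subtype, card_filter]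
  push_cast
  rfl

theorem sum_symm_comp_rank (n : ℕ) (h : ℕ → R) :
    ∑ A : {A : Matrix (Fin n) (Fin n) F // A.IsSymm}, h A.1.rank =
      ∑ k ∈ range (n + 1), (symmRankCount F n k : R) * h k := by
  have hrank (A : Matrix (Fin n) (Fin n) F) : A.rank ∈ range (n + 1) :=
    mem_range_succ_iff.mpr A.rank_le_width
  simp only [symmRankCount_eq_sum, sum_mul, ite_mul, one_mul, zero_mul]
  rw [sum_comm]
  exact sum_congr rfl fun A _ => by rw [sum_ite_eq, if_pos (hrank A.1)]

theorem sum_symm_succ_comp_rank (n : ℕ) (g : ℕ → R) :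
    ∑ A : {A : Matrix (Fin (n + 1)) (Fin (n + 1)) F // A.IsSymm}, g A.1.rank =
      ∑ C : {C : Matrix (Fin n) (Fin n) F // C.IsSymm},
        ∑ p : (Fin n → F) × F, g (C.1.border p.1 p.2).rank := by
  let e : Fin n ⊕ Fin 1 ≃ Fin (n + 1) := finSumFinEquiv
  let reindexSymm : {A : Matrix (Fin n ⊕ Fin 1) (Fin n ⊕ Fin 1) F // A.IsSymm} ≃
      {A : Matrix (Fin (n + 1)) (Fin (n + 1)) F // A.IsSymm} :=
    (Matrix.reindex e e).subtypeEquiv fun A => (Matrix.isSymm_reindex_iff e).symm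
  rw [← Fintype.sum_prod_type', ← (Matrix.symmBorderEquiv.trans reindexSymm).sum_comp]
  simp only [reindexSymm, Equiv.trans_apply, Equiv.subtypeEquiv_apply, Matrix.rank_reindex]
  rfl

theorem symmRankCount_succ (n r : ℕ) :
    (symmRankCount F (n + 1) r : R) =
      ∑ k ∈ range (n + 1), (symmRankCount F n k : R) * borderCount (Fintype.card F : R) n k r := by
  rw [symmRankCount_eq_sum, sum_symm_succ_comp_rank n fun j => if j = r then 1 else 0,
    ← sum_symm_comp_rank]
  refine sum_congr rfl fun C _ => ?_
  rw [C.2.sum_rank_border fun j => if j = r then 1 else 0, Fintype.card_fin, borderCount]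

end SymmRankCount

section Formula

variable {q : ℚ}

def symmRankFactor (q : ℚ) (r : ℕ) : ℚ :=
  ∏ i ∈ Icc 1 (r / 2), q ^ (2 * i) / (q ^ (2 * i) - 1)

/-- MacWilliams' count of symmetric `n × n` matrices of rank `r` over `𝔽_q`, for ranks of either
parity: the recurrence mixes them. -/
def symmRankFormula (q : ℚ) (n r : ℕ) : ℚ :=
  symmRankFactor q r * ∏ i ∈ range r, (q ^ (n - i) - 1)

theorem prod_Icc_div_pow_sub_one_succ (hq : 1 < q) (s : ℕ) :
    (∏ i ∈ Icc 1 (s + 1), q ^ (2 * i) / (q ^ (2 * i) - 1)) * (q ^ (2 * s + 2) - 1) =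
      (∏ i ∈ Icc 1 s, q ^ (2 * i) / (q ^ (2 * i) - 1)) * q ^ (2 * s + 2) := by
  have hne : q ^ (2 * s + 2) - 1 ≠ 0 := sub_ne_zero.mpr (one_lt_pow₀ hq (by omega)).ne'
  rw [prod_Icc_succ_top (by omega), mul_assoc, show 2 * (s + 1) = 2 * s + 2 by ring,
    div_mul_cancel₀ _ hne]

theorem symmRankFactor_add_two (hq : 1 < q) (j : ℕ) :
    symmRankFactor q (j + 2) * (q ^ (j + 2) - 1) =
      q ^ (j + 1) * ((q - 1) * symmRankFactor q (j + 1) + symmRankFactor q j) := by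
  obtain ⟨s, rfl | rfl⟩ := Nat.even_or_odd' j
  · have h₂ : (2 * s + 2) / 2 = s + 1 := by omega
    have h₁ : (2 * s + 1) / 2 = s := by omega
    simp only [symmRankFactor, h₂, h₁, Nat.mul_div_cancel_left s two_pos]
    linear_combination prod_Icc_div_pow_sub_one_succ hq s
  · have h₃ : (2 * s + 1 + 2) / 2 = s + 1 := by omega
    have h₂ : (2 * s + 1 + 1) / 2 = s + 1 := by omega
    have h₁ : (2 * s + 1) / 2 = s := by omega
    simp only [symmRankFactor, h₃, h₂, h₁]
    linear_combination prod_Icc_div_pow_sub_one_succ hq s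

theorem symmRankFormula_zero_right (q : ℚ) (n : ℕ) : symmRankFormula q n 0 = 1 := by
  simp [symmRankFormula, symmRankFactor]

theorem symmRankFormula_eq_zero_of_lt {n r : ℕ} (h : n < r) : symmRankFormula q n r = 0 := by
  rw [symmRankFormula, prod_eq_zero (mem_range.mpr h) (by simp), mul_zero]

theorem symmRankFormula_zero_left (q : ℚ) (r : ℕ) :
    symmRankFormula q 0 r = if r = 0 then 1 else 0 := by
  split_ifs with hr
  · rw [hr, symmRankFormula_zero_right]
  · exact symmRankFormula_eq_zero_of_lt (Nat.pos_of_ne_zero hr)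

theorem symmRankFormula_succ_one (q : ℚ) (n : ℕ) :
    symmRankFormula q (n + 1) 1 = q * symmRankFormula q n 1 + (q - 1) * symmRankFormula q n 0 := by
  have h₁ (n : ℕ) : symmRankFormula q n 1 = q ^ n - 1 := by simp [symmRankFormula, symmRankFactor]
  rw [h₁, h₁, symmRankFormula_zero_right]
  ring

theorem symmRankFormula_succ_add_two (hq : 1 < q) (n j : ℕ) :
    symmRankFormula q (n + 1) (j + 2) =
      q ^ (j + 2) * symmRankFormula q n (j + 2) +
        q ^ (j + 1) * (q - 1) * symmRankFormula q n (j + 1) +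
          (q ^ n - q ^ j) * q * symmRankFormula q n j := by
  rcases lt_or_ge j n with hjn | hnj
  · obtain ⟨m, rfl⟩ := Nat.exists_eq_add_of_lt hjn
    set P := ∏ i ∈ range j, (q ^ (j + m + 1 - i) - 1)
    have hP₁ : ∏ i ∈ range (j + 1), (q ^ (j + m + 1 - i) - 1) = P * (q ^ (m + 1) - 1) := by
      rw [prod_range_succ, show j + m + 1 - j = m + 1 by omega]
    have hP₂ : ∏ i ∈ range (j + 2), (q ^ (j + m + 1 - i) - 1) =
        P * (q ^ (m + 1) - 1) * (q ^ m - 1) := by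
      rw [prod_range_succ, hP₁, show j + m + 1 - (j + 1) = m by omega]
    have hP₂' : ∏ i ∈ range (j + 2), (q ^ (j + m + 1 + 1 - i) - 1) =
        (q ^ (j + m + 2) - 1) * (P * (q ^ (m + 1) - 1)) := by
      rw [prod_range_succ', ← hP₁, mul_comm]
      simp
    simp only [symmRankFormula, hP₁, hP₂, hP₂']
    linear_combination (q ^ (m + 1) - 1) * P * symmRankFactor_add_two hq j
  · have h₁ : symmRankFormula q n (j + 1) = 0 := symmRankFormula_eq_zero_of_lt (by omega)
    have h₂ : symmRankFormula q n (j + 2) = 0 := symmRankFormula_eq_zero_of_lt (by omega)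
    rw [symmRankFormula_eq_zero_of_lt (by omega), h₁, h₂]
    rcases hnj.eq_or_lt with rfl | hlt
    · ring
    · rw [symmRankFormula_eq_zero_of_lt hlt]
      ring

theorem sum_range_ite_symmRankFormula (n j : ℕ) (c : ℕ → ℚ) :
    ∑ k ∈ range (n + 1), (if k = j then symmRankFormula q n k * c k else 0) =
      symmRankFormula q n j * c j := by
  rw [sum_ite_eq']
  split_ifs with hj
  · rfl
  · rw [symmRankFormula_eq_zero_of_lt (by simpa using hj), zero_mul]

theorem symmRankFormula_succ (hq : 1 < q) (n r : ℕ) :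
    symmRankFormula q (n + 1) r =
      ∑ k ∈ range (n + 1), symmRankFormula q n k * borderCount q n k r := by
  simp only [borderCount, mul_add, mul_ite, mul_one, mul_zero, sum_add_distrib]
  rcases r with _ | _ | j <;>
    simp only [sum_range_ite_symmRankFormula, Nat.add_right_cancel_iff, Nat.reduceEqDiff,
      Nat.add_eq_zero_iff, Nat.add_eq_right, one_ne_zero, OfNat.ofNat_ne_zero, and_false, if_false,
      sum_const_zero, add_zero, zero_add]
  · rw [symmRankFormula_zero_right, symmRankFormula_zero_right, pow_zero, mul_one]
  · linear_combination symmRankFormula_succ_one q n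
  · linear_combination symmRankFormula_succ_add_two hq n j

end Formula

theorem symmRankCount_eq_symmRankFormula (F : Type*) [Field F] [Fintype F] (n r : ℕ) :
    (symmRankCount F n r : ℚ) = symmRankFormula (Fintype.card F) n r := by
  classical
  have hq : (1 : ℚ) < Fintype.card F := by exact_mod_cast Fintype.one_lt_card
  induction n generalizing r with
  | zero => rw [symmRankCount_zero_left, symmRankFormula_zero_left]; push_cast; rfl
  | succ n ih =>
    rw [symmRankCount_succ, symmRankFormula_succ hq]
    exact sum_congr rfl fun k _ => by rw [ih]

theorem card_symmetric_matrices_even_rank_general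
    (F : Type) [Field F] [Fintype F]
    (n s : ℕ) :
    (Nat.card {A : Matrix (Fin n) (Fin n) F // A.IsSymm ∧ A.rank = 2 * s} : ℚ) =
      (∏ i ∈ Finset.Icc 1 s,
        ((Fintype.card F : ℚ) ^ (2 * i)) / ((Fintype.card F : ℚ) ^ (2 * i) - 1)) *
      ∏ i ∈ Finset.range (2 * s), ((Fintype.card F : ℚ) ^ (n - i) - 1) := by
  have h := symmRankCount_eq_symmRankFormula F n (2 * s)
  rwa [symmRankFormula, symmRankFactor, Nat.mul_div_cancel_left s two_pos] at h

/-- **Counting symmetric matrices of even rank over a finite field.** Let `F` be a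
finite field of odd cardinality `q`. The number of symmetric `n×n` matrices over `F`
of rank `r = 2s` (with `2s ≤ n`) equals
`∏_{i=1}^{s} q^{2i}/(q^{2i}−1) · ∏_{i=0}^{2s−1} (q^{n−i} − 1)`. -/
theorem card_symmetric_matrices_even_rank
    (F : Type) [Field F] [Fintype F] (hq : Odd (Fintype.card F))
    (n s : ℕ) (hs : 2 * s ≤ n) :
    (Nat.card {A : Matrix (Fin n) (Fin n) F // A.IsSymm ∧ A.rank = 2 * s} : ℚ) =
      (∏ i ∈ Finset.Icc 1 s,
        ((Fintype.card F : ℚ) ^ (2 * i)) / ((Fintype.card F : ℚ) ^ (2 * i) - 1)) *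
      ∏ i ∈ Finset.range (2 * s), ((Fintype.card F : ℚ) ^ (n - i) - 1) :=
  card_symmetric_matrices_even_rank_general F n s
end

section
/- Over a finite field 𝔽_q with q odd, the number of symmetric n×n matrices of odd rank r = 2s+1 over 𝔽_q equals Π_{i=1}^{s} q^{2i}/(q^{2i}−1) · Π_{i=0}^{2s} (q^{n−i} − 1). -/
/-!
Every symmetric matrix `A` of rank `r` factors as `A = B S Bᵀ` with `B` an `n × r` matrix of full
column rank and `S` an invertible symmetric `r × r` matrix, and two such factorizations differ by
`(B, S) ↦ (B G, G⁻¹ S G⁻ᵀ)` for a unique `G ∈ GL_r`. Hence `#Sym_r(n) · |GL_r|` equals the number of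
full-rank `n × r` matrices times the number `N(r)` of invertible symmetric `r × r` matrices.

Bordering by the first row and column gives `N(k+2) = (q-1) q^(k+1) N(k+1) + (q^(k+1)-1) q^(k+1) N(k)`:
a nonzero corner `a` splits off through its Schur complement, while for `a = 0` the border `u ≠ 0`
can be moved to a basis vector by a congruence, after which a hyperbolic plane splits off. This
recursion solves to `N(2s+1) = q^(s(s+1)) ∏_{i ≤ s} (q^(2i+1) - 1)`, and the formula follows from
the standard counts of `GL_r` and of full-rank matrices.
-/

open Matrix Sum

lemma Nat.cast_prod_pow_sub_pow {R : Type*} [CommRing R] {q r n : ℕ} (hq : 0 < q) (h : r ≤ n) :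
    ((∏ i : Fin r, (q ^ n - q ^ (i : ℕ)) : ℕ) : R) =
      (q : R) ^ (∑ i ∈ Finset.range r, i) * ∏ i ∈ Finset.range r, ((q : R) ^ (n - i) - 1) := by
  rw [Nat.cast_prod, Fin.prod_univ_eq_prod_range (fun i => ((q ^ n - q ^ i : ℕ) : R)),
    ← Finset.prod_pow_eq_pow_sum, ← Finset.prod_mul_distrib]
  refine Finset.prod_congr rfl fun i hi => ?_
  have hin : i ≤ n := (Finset.mem_range.1 hi).le.trans h
  rw [Nat.cast_sub (Nat.pow_le_pow_right hq hin), mul_sub, ← pow_add, Nat.add_sub_cancel' hin]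
  push_cast
  ring

namespace Finset

lemma prod_range_pow_sub_one_odd {R : Type*} [CommRing R] (x : R) (s : ℕ) :
    ∏ i ∈ range (2 * s + 1), (x ^ (2 * s + 1 - i) - 1) =
      (∏ i ∈ range (s + 1), (x ^ (2 * i + 1) - 1)) * ∏ i ∈ Icc 1 s, (x ^ (2 * i) - 1) := by
  induction s with
  | zero => simp
  | succ s ih =>
    rw [show 2 * (s + 1) + 1 = 2 * s + 1 + 1 + 1 by ring, prod_range_succ', prod_range_succ',
      prod_range_succ _ (s + 1), prod_Icc_succ_top (by omega)]
    simp only [show ∀ i, 2 * s + 1 + 1 + 1 - (i + 1 + 1) = 2 * s + 1 - i by omega, ih,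
      show 2 * s + 1 + 1 + 1 - (0 + 1) = 2 * (s + 1) by omega,
      show 2 * s + 1 + 1 + 1 - 0 = 2 * (s + 1) + 1 by omega]
    ring

lemma prod_Icc_pow_two_mul {M : Type*} [CommMonoid M] (x : M) (s : ℕ) :
    ∏ i ∈ Icc 1 s, x ^ (2 * i) = x ^ (s * (s + 1)) := by
  induction s with
  | zero => simp
  | succ s ih =>
    rw [prod_Icc_succ_top (by omega), ih, ← pow_add]
    ring_nf

end Finset

namespace Matrix

variable {R F : Type*} [CommRing R] [Field F] {l m n : Type*}

lemma IsSymm.mul_mul_transpose [Fintype n] {X : Matrix n n R} (hX : X.IsSymm)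
    (P : Matrix m n R) : (P * X * Pᵀ).IsSymm := by
  rw [IsSymm, transpose_mul, transpose_mul, transpose_transpose, hX.eq, Matrix.mul_assoc]

lemma mul_mul_transpose_mul_mul_transpose [Fintype n] [Fintype l] (B : Matrix m n R)
    (P : Matrix n l R) (X : Matrix l l R) : B * (P * X * Pᵀ) * Bᵀ = B * P * X * (B * P)ᵀ := by
  simp only [transpose_mul, Matrix.mul_assoc]

lemma mul_mul_transpose_cancel [Fintype m] [Fintype n] [DecidableEq n] {B : Matrix m n R}
    {L : Matrix n m R} (hL : L * B = 1) (X : Matrix n n R) : L * (B * X * Bᵀ) * Lᵀ = X :=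
  calc L * (B * X * Bᵀ) * Lᵀ = L * B * X * (L * B)ᵀ := by
        simp only [transpose_mul, Matrix.mul_assoc]
    _ = X := by rw [hL, transpose_one, Matrix.one_mul, Matrix.mul_one]

lemma isUnit_mul_mul_transpose [Fintype n] [DecidableEq n] {P X : Matrix n n R} (hP : IsUnit P)
    (hX : IsUnit X) : IsUnit (P * X * Pᵀ) :=
  (hP.mul hX).mul ((isUnit_transpose P).2 hP)

section FullColumnRank

variable [Fintype m] [Fintype n] [DecidableEq n]

lemma rank_mul_mul_transpose {B : Matrix m n F} {L : Matrix n m F} (hL : L * B = 1)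
    {S : Matrix n n F} (hS : IsUnit S) : (B * S * Bᵀ).rank = Fintype.card n := by
  refine le_antisymm ?_ ?_
  · calc (B * S * Bᵀ).rank ≤ (B * S).rank := rank_mul_le_left _ _
      _ ≤ B.rank := rank_mul_le_left _ _
      _ ≤ Fintype.card n := rank_le_card_width B
  · calc Fintype.card n = S.rank := (rank_of_isUnit S hS).symm
      _ = (L * (B * S * Bᵀ) * Lᵀ).rank := by rw [mul_mul_transpose_cancel hL]
      _ ≤ (L * (B * S * Bᵀ)).rank := rank_mul_le_left _ _
      _ ≤ (B * S * Bᵀ).rank := rank_mul_le_right _ _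

lemma linearIndependent_col_of_mul_eq_one {B : Matrix m n F} {L : Matrix n m F}
    (hL : L * B = 1) : LinearIndependent F B.col :=
  mulVec_injective_iff.1 fun x y h => by
    simpa [mulVec_mulVec, hL] using congrArg (L *ᵥ ·) h

lemma exists_mul_eq_one_of_linearIndependent_col [DecidableEq m] {B : Matrix m n F}
    (hB : LinearIndependent F B.col) : ∃ L : Matrix n m F, L * B = 1 := by
  obtain ⟨g, hg⟩ := B.mulVecLin.exists_leftInverse_of_injective
    (LinearMap.ker_eq_bot.2 (mulVec_injective_iff.2 hB))
  refine ⟨LinearMap.toMatrix' g, ?_⟩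
  simpa [LinearMap.toMatrix'_comp, ← Matrix.toLin'_apply'] using congrArg LinearMap.toMatrix' hg

lemma exists_eq_mul_of_mul_mul_transpose_eq {B B' : Matrix m n F} {L L' : Matrix n m F}
    (hL : L * B = 1) (hL' : L' * B' = 1) {S S' : Matrix n n F} (hS : IsUnit S) (hS' : IsUnit S')
    (h : B * S * Bᵀ = B' * S' * B'ᵀ) :
    ∃ G : GL n F, B' = B * (G : Matrix n n F) ∧ S = G * S' * (G : Matrix n n F)ᵀ := by
  -- `B'` is recovered from `B' S' B'ᵀ = B S Bᵀ` through its left inverse, so it factors through `B`.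
  have hfactor {B B' : Matrix m n F} {L' : Matrix n m F} (hL' : L' * B' = 1)
      {S S' : Matrix n n F} (hS' : IsUnit S') (h : B * S * Bᵀ = B' * S' * B'ᵀ) :
      B' = B * (S * Bᵀ * L'ᵀ * S'⁻¹) :=
    calc B' = B' * S' * (L' * B')ᵀ * S'⁻¹ := by
          rw [hL', transpose_one, Matrix.mul_one,
            Matrix.mul_nonsing_inv_cancel_right _ _ ((isUnit_iff_isUnit_det _).1 hS')]
      _ = B * (S * Bᵀ * L'ᵀ * S'⁻¹) := by
          rw [transpose_mul, ← Matrix.mul_assoc, ← Matrix.mul_assoc, ← h]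
          simp only [Matrix.mul_assoc]
  set M := S * Bᵀ * L'ᵀ * S'⁻¹
  have hB' : B' = B * M := hfactor hL' hS' h
  have hB : B = B' * (S' * B'ᵀ * Lᵀ * S⁻¹) := hfactor hL hS h.symm
  have hM : M * (S' * B'ᵀ * Lᵀ * S⁻¹) = 1 :=
    calc M * (S' * B'ᵀ * Lᵀ * S⁻¹) = L * B * M * (S' * B'ᵀ * Lᵀ * S⁻¹) := by
          rw [hL, Matrix.one_mul]
      _ = 1 := by rw [Matrix.mul_assoc L, ← hB', Matrix.mul_assoc, ← hB, hL]
  refine ⟨Units.mkOfMulEqOne _ _ hM, hB', ?_⟩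
  calc S = L * (B * S * Bᵀ) * Lᵀ := (mul_mul_transpose_cancel hL S).symm
    _ = L * (B * (M * S' * Mᵀ) * Bᵀ) * Lᵀ := by
        rw [h, hB', transpose_mul]
        simp only [Matrix.mul_assoc]
    _ = M * S' * Mᵀ := mul_mul_transpose_cancel hL _

end FullColumnRank

lemma exists_rank_factorization [Fintype n] [DecidableEq n] (A : Matrix m n F) {r : ℕ}
    (hr : A.rank = r) : ∃ (B : Matrix m (Fin r) F) (C : Matrix (Fin r) n F),
      Function.Injective B.mulVec ∧ Function.Surjective C.mulVec ∧ B * C = A := by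
  subst hr
  let V := LinearMap.range A.mulVecLin
  let b : Module.Basis (Fin A.rank) F V := Module.finBasisOfFinrankEq F V rfl
  let f := V.subtype ∘ₗ b.equivFun.symm.toLinearMap
  let g := b.equivFun.toLinearMap ∘ₗ A.mulVecLin.rangeRestrict
  refine ⟨LinearMap.toMatrix' f, LinearMap.toMatrix' g, ?_, ?_, ?_⟩
  · rw [show (LinearMap.toMatrix' f).mulVec = f from funext (LinearMap.toMatrix'_mulVec f)]
    exact V.injective_subtype.comp b.equivFun.symm.injective
  · rw [show (LinearMap.toMatrix' g).mulVec = g from funext (LinearMap.toMatrix'_mulVec g)]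
    exact b.equivFun.surjective.comp A.mulVecLin.surjective_rangeRestrict
  · rw [← LinearMap.toMatrix'_comp]
    convert LinearMap.toMatrix'_toLin' A
    ext v
    simp [f, g]

def nondegSymm (n R : Type*) [Fintype n] [DecidableEq n] [CommRing R] : Set (Matrix n n R) :=
  {A | A.IsSymm ∧ IsUnit A}

lemma card_nondegSymm_congr [Fintype m] [DecidableEq m] [Fintype n] [DecidableEq n]
    (e : m ≃ n) : Nat.card (nondegSymm m R) = Nat.card (nondegSymm n R) :=
  Nat.card_congr <| (reindex e e).subtypeEquiv fun A => by
    simp only [nondegSymm, Set.mem_ofPred_eq, isSymm_reindex_iff, isUnit_iff_isUnit_det,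
      det_reindex_self]

lemma card_nondegSymm_fin_zero : Nat.card (nondegSymm (Fin 0) R) = 1 :=
  Nat.card_eq_one_iff_unique.2 ⟨inferInstance, ⟨⟨1, isSymm_one, isUnit_one⟩⟩⟩

section Factorization

variable [Fintype m] [DecidableEq m] [Fintype n] [DecidableEq n]

lemma exists_eq_mul_mul_transpose {A : Matrix m m F} (hA : A.IsSymm) {r : ℕ} (hr : A.rank = r) :
    ∃ (B : Matrix m (Fin r) F) (S : Matrix (Fin r) (Fin r) F),
      LinearIndependent F B.col ∧ S ∈ nondegSymm (Fin r) F ∧ B * S * Bᵀ = A := by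
  obtain ⟨B, C, hB, hC, hBC⟩ := exists_rank_factorization A hr
  obtain ⟨L, hL⟩ := exists_mul_eq_one_of_linearIndependent_col (mulVec_injective_iff.1 hB)
  obtain ⟨R, hR⟩ := mulVec_surjective_iff_exists_right_inverse.1 hC
  have hBLA : B * L * A = A := by
    rw [← hBC, Matrix.mul_assoc B L, ← Matrix.mul_assoc L, hL, Matrix.one_mul]
  have hALB : A * Lᵀ * Bᵀ = A :=
    calc A * Lᵀ * Bᵀ = (B * L * Aᵀ)ᵀ := by
          simp only [transpose_mul, transpose_transpose, Matrix.mul_assoc]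
      _ = A := by rw [hA.eq, hBLA, hA.eq]
  have hS : L * A * Lᵀ * (Bᵀ * R) = 1 :=
    calc L * A * Lᵀ * (Bᵀ * R) = L * (A * Lᵀ * Bᵀ) * R := by simp only [Matrix.mul_assoc]
      _ = L * B * (C * R) := by rw [hALB, ← hBC]; simp only [Matrix.mul_assoc]
      _ = 1 := by rw [hL, hR, Matrix.one_mul]
  refine ⟨B, L * A * Lᵀ, mulVec_injective_iff.1 hB,
    ⟨hA.mul_mul_transpose L, .of_mul_eq_one _ hS⟩, ?_⟩
  simp only [← Matrix.mul_assoc]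
  rw [hBLA, hALB]

lemma card_fiber_mul_mul_transpose {B₀ : Matrix m n F} {L₀ : Matrix n m F} (hL₀ : L₀ * B₀ = 1)
    {S₀ : Matrix n n F} (hS₀ : S₀ ∈ nondegSymm n F) :
    Nat.card {p : {B : Matrix m n F // LinearIndependent F B.col} × nondegSymm n F //
      p.1.1 * p.2.1 * p.1.1ᵀ = B₀ * S₀ * B₀ᵀ} = Nat.card (GL n F) := by
  let f (G : GL n F) : {p : {B : Matrix m n F // LinearIndependent F B.col} × nondegSymm n F //
      p.1.1 * p.2.1 * p.1.1ᵀ = B₀ * S₀ * B₀ᵀ} :=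
    ⟨(⟨B₀ * (G : Matrix n n F),
        linearIndependent_col_of_mul_eq_one (L := (↑G⁻¹ : Matrix n n F) * L₀) (by
          rw [Matrix.mul_assoc, ← Matrix.mul_assoc L₀, hL₀, Matrix.one_mul, G.inv_mul])⟩,
      ⟨(↑G⁻¹ : Matrix n n F) * S₀ * (↑G⁻¹ : Matrix n n F)ᵀ, hS₀.1.mul_mul_transpose _,
        isUnit_mul_mul_transpose G⁻¹.isUnit hS₀.2⟩),
      by simp only [← mul_mul_transpose_mul_mul_transpose, mul_mul_transpose_cancel G.mul_inv]⟩
  refine (Nat.card_congr (Equiv.ofBijective f ⟨fun G G' h => ?_, ?_⟩)).symm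
  · have h' : B₀ * (G : Matrix n n F) = B₀ * (G' : Matrix n n F) := congrArg (·.1.1.1) h
    refine Units.ext ?_
    simpa [← Matrix.mul_assoc, hL₀] using congrArg (L₀ * ·) h'
  · rintro ⟨⟨⟨B, hB⟩, ⟨S, hS⟩⟩, h⟩
    obtain ⟨L, hL⟩ := exists_mul_eq_one_of_linearIndependent_col hB
    obtain ⟨G, rfl, hG⟩ := exists_eq_mul_of_mul_mul_transpose_eq hL₀ hL hS₀.2 hS.2 h.symm
    refine ⟨G, Subtype.ext (Prod.ext rfl (Subtype.ext ?_))⟩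
    simp only [f, hG, mul_mul_transpose_cancel G.inv_mul]

end Factorization

section Count

variable [Fintype F] [Fintype m]

lemma card_isSymm_rank_mul_card_GL [DecidableEq m] (r : ℕ) :
    Nat.card {A : Matrix m m F // A.IsSymm ∧ A.rank = r} * Nat.card (GL (Fin r) F) =
      Nat.card {B : Matrix m (Fin r) F // LinearIndependent F B.col} *
        Nat.card (nondegSymm (Fin r) F) := by
  classical
  let Φ (p : {B : Matrix m (Fin r) F // LinearIndependent F B.col} × nondegSymm (Fin r) F) :
      {A : Matrix m m F // A.IsSymm ∧ A.rank = r} :=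
    ⟨p.1.1 * p.2.1 * p.1.1ᵀ, p.2.2.1.mul_mul_transpose _,
      (rank_mul_mul_transpose (exists_mul_eq_one_of_linearIndependent_col p.1.2).choose_spec
        p.2.2.2).trans (Fintype.card_fin r)⟩
  have hfiber (A) : Nat.card {p // Φ p = A} = Nat.card (GL (Fin r) F) := by
    obtain ⟨B₀, S₀, hB₀, hS₀, hA⟩ := exists_eq_mul_mul_transpose A.2.1 A.2.2
    obtain ⟨L₀, hL₀⟩ := exists_mul_eq_one_of_linearIndependent_col hB₀
    rw [← card_fiber_mul_mul_transpose hL₀ hS₀, hA]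
    exact Nat.card_congr (Equiv.subtypeEquivRight fun p => Subtype.ext_iff)
  have hcard := Nat.card_congr (Equiv.sigmaFiberEquiv Φ)
  rwa [Nat.card_sigma, Finset.sum_congr rfl fun A _ => hfiber A, Finset.sum_const,
    Finset.card_univ, smul_eq_mul, Nat.card_prod, ← Nat.card_eq_fintype_card] at hcard

lemma card_linearIndependent_col {r : ℕ} (hr : r ≤ Fintype.card m) :
    Nat.card {B : Matrix m (Fin r) F // LinearIndependent F B.col} =
      ∏ i : Fin r, (Fintype.card F ^ Fintype.card m - Fintype.card F ^ (i : ℕ)) := by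
  have h := card_linearIndependent (K := F) (V := m → F) (k := r)
    (by rwa [Module.finrank_fintype_fun_eq_card])
  rw [Module.finrank_fintype_fun_eq_card] at h
  exact (Nat.card_congr
    ((transposeAddEquiv m (Fin r) F).toEquiv.subtypeEquiv fun _ => Iff.rfl)).trans h

end Count

def symmBorder (a : R) (u : n → R) (D : Matrix n n R) : Matrix (Unit ⊕ n) (Unit ⊕ n) R :=
  fromBlocks (scalar Unit a) (replicateRow Unit u) (replicateCol Unit u) D

lemma isSymm_symmBorder_iff {a : R} {u : n → R} {D : Matrix n n R} :
    (symmBorder a u D).IsSymm ↔ D.IsSymm := by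
  simp [symmBorder, isSymm_fromBlocks_iff, isSymm_diagonal]

lemma symmBorder_entries_eq {A : Matrix (Unit ⊕ n) (Unit ⊕ n) R} (hA : A.IsSymm) :
    symmBorder (A (inl ()) (inl ())) (fun j => A (inl ()) (inr j)) A.toBlocks₂₂ = A := by
  ext (⟨⟩ | i) (⟨⟩ | j)
  · rfl
  · rfl
  · exact hA.apply (inr i) (inl ())
  · rfl

lemma fromBlocks_mul_symmBorder_mul_transpose [Fintype n] (P : Matrix n n R) (a : R)
    (u : n → R) (D : Matrix n n R) :
    fromBlocks 1 0 0 P * symmBorder a u D * (fromBlocks 1 0 0 P)ᵀ =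
      symmBorder a (P *ᵥ u) (P * D * Pᵀ) := by
  simp [symmBorder, fromBlocks_transpose, fromBlocks_multiply, replicateCol_mulVec,
    replicateRow_mulVec]

lemma reindex_symmBorder_zero_single [DecidableEq n] (b : R) (v : n → R) (C : Matrix n n R) :
    reindex (Equiv.sumAssoc Unit Unit n).symm (Equiv.sumAssoc Unit Unit n).symm
        (symmBorder 0 (Pi.single (inl ()) 1) (symmBorder b v C)) =
      fromBlocks (symmBorder 0 (fun _ => 1) (scalar Unit b)) (fromRows 0 (replicateRow Unit v))
        (fromCols 0 (replicateCol Unit v)) C := by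
  ext ((⟨⟩ | ⟨⟩) | i) ((⟨⟩ | ⟨⟩) | j) <;> simp [symmBorder]

section Bordering

variable [Fintype n] [DecidableEq n]

lemma exists_isUnit_mulVec_single_eq (i : n) {u : n → F} (hu : u ≠ 0) :
    ∃ P : Matrix n n F, IsUnit P ∧ P *ᵥ Pi.single i 1 = u := by
  have he : (Pi.single i 1 : n → F) ≠ 0 := by simp
  obtain ⟨g, hg⟩ := Submodule.exists_linearEquiv_restrict_eq
    ((LinearEquiv.toSpanNonzeroSingleton F _ _ he).symm.trans
      (LinearEquiv.toSpanNonzeroSingleton F _ u hu))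
  have hgi := hg (LinearEquiv.toSpanNonzeroSingleton F _ _ he 1)
  rw [LinearEquiv.trans_apply, LinearEquiv.symm_apply_apply] at hgi
  have hmulVec : (LinearMap.toMatrix' g.toLinearMap).mulVec = g :=
    funext (LinearMap.toMatrix'_mulVec _)
  refine ⟨LinearMap.toMatrix' g.toLinearMap, mulVec_injective_iff_isUnit.1 ?_, ?_⟩
  · simpa only [hmulVec] using g.injective
  · rw [hmulVec]
    simpa using hgi.symm

lemma isUnit_symmBorder_iff {a : F} (ha : a ≠ 0) (u : n → F) (D : Matrix n n F) :
    IsUnit (symmBorder a u D) ↔ IsUnit (D - a⁻¹ • vecMulVec u u) := by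
  have hinv : scalar Unit a * scalar Unit a⁻¹ = 1 := by
    rw [← map_mul, mul_inv_cancel₀ ha, map_one]
  let _ := invertibleOfRightInverse _ _ hinv
  rw [symmBorder, isUnit_fromBlocks_iff_of_invertible₁₁, invOf_eq_right_inv hinv, scalar_apply,
    ← smul_eq_mul_diagonal, Matrix.smul_mul, vecMulVec_eq Unit]

/-- The hyperbolic plane `[[0, 1], [1, b]]` in the corner splits off, with Schur complement `C`. -/
lemma isUnit_symmBorder_zero_single_iff (b : R) (v : n → R) (C : Matrix n n R) :
    IsUnit (symmBorder 0 (Pi.single (inl ()) 1) (symmBorder b v C)) ↔ IsUnit C := by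
  have hinv : symmBorder 0 (fun _ => 1) (scalar Unit b) * symmBorder (-b) (fun _ => 1) 0 = 1 := by
    ext (⟨⟩ | ⟨⟩) (⟨⟩ | ⟨⟩) <;> simp [symmBorder, mul_apply]
  let _ := invertibleOfRightInverse _ _ hinv
  have hcross : fromCols (0 : Matrix n Unit R) (replicateCol Unit v) *
      symmBorder (-b) (fun _ => 1) (0 : Matrix Unit Unit R) *
      fromRows (0 : Matrix Unit n R) (replicateRow Unit v) = 0 := by
    ext i j
    simp [symmBorder, mul_apply]
  rw [isUnit_iff_isUnit_det, ← det_reindex_self (Equiv.sumAssoc Unit Unit n).symm,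
    ← isUnit_iff_isUnit_det, reindex_symmBorder_zero_single,
    isUnit_fromBlocks_iff_of_invertible₁₁, invOf_eq_right_inv hinv, hcross, sub_zero]

def nondegSymmFiber (a : F) (u : n → F) : Set (Matrix n n F) :=
  {D | D.IsSymm ∧ IsUnit (symmBorder a u D)}

def nondegSymmEquivSigmaFiber :
    nondegSymm (Unit ⊕ n) F ≃ Σ p : F × (n → F), nondegSymmFiber p.1 p.2 where
  toFun A := ⟨(A.1 (inl ()) (inl ()), fun j => A.1 (inl ()) (inr j)), A.1.toBlocks₂₂,
    A.2.1.submatrix inr, by simpa only [symmBorder_entries_eq A.2.1] using A.2.2⟩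
  invFun x := ⟨symmBorder x.1.1 x.1.2 x.2, isSymm_symmBorder_iff.2 x.2.2.1, x.2.2.2⟩
  left_inv A := Subtype.ext (symmBorder_entries_eq A.2.1)
  right_inv x := rfl

lemma card_nondegSymmFiber_of_ne_zero {a : F} (ha : a ≠ 0) (u : n → F) :
    Nat.card (nondegSymmFiber a u) = Nat.card (nondegSymm n F) :=
  Nat.card_congr <| (Equiv.subRight (a⁻¹ • vecMulVec u u)).subtypeEquiv fun D => by
    have hsymm : (a⁻¹ • vecMulVec u u).IsSymm := IsSymm.smul (transpose_vecMulVec u u) _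
    simp only [nondegSymmFiber, nondegSymm, Set.mem_ofPred_eq, Equiv.subRight_apply,
      isUnit_symmBorder_iff ha]
    exact and_congr_left fun _ => ⟨fun h => h.sub hsymm, fun h => by simpa using h.add hsymm⟩

lemma nondegSymmFiber_zero_zero : nondegSymmFiber (0 : F) (0 : n → F) = ∅ := by
  refine Set.eq_empty_of_forall_notMem fun D hD => ?_
  have hrow : ∀ j, symmBorder (0 : F) 0 D (inl ()) j = 0 := by
    rintro (⟨⟩ | j) <;> rfl
  exact (isUnit_iff_isUnit_det _).1 hD.2 |>.ne_zero (det_eq_zero_of_row_eq_zero _ hrow)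

end Bordering

section Recursion

variable [Fintype n] [DecidableEq n] [Fintype F]

local notation "q" => Fintype.card F

lemma card_nondegSymmFiber_le_mulVec {P : Matrix n n F} (hP : IsUnit P) (a : F) (u : n → F) :
    Nat.card (nondegSymmFiber a u) ≤ Nat.card (nondegSymmFiber a (P *ᵥ u)) := by
  have hQ : IsUnit (fromBlocks 1 0 0 P : Matrix (Unit ⊕ n) (Unit ⊕ n) F) :=
    isUnit_fromBlocks_zero₁₂.2 ⟨isUnit_one, hP⟩
  refine Nat.card_le_card_of_injective
    (fun D => ⟨P * D.1 * Pᵀ, D.2.1.mul_mul_transpose P, ?_⟩) fun D D' h => ?_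
  · rw [← fromBlocks_mul_symmBorder_mul_transpose]
    exact isUnit_mul_mul_transpose hQ D.2.2
  · have h' : P * D.1 * Pᵀ = P * D'.1 * Pᵀ := congrArg Subtype.val h
    exact Subtype.ext (hP.mul_left_cancel (((isUnit_transpose P).2 hP).mul_right_cancel h'))

lemma card_nondegSymmFiber_mulVec {P : Matrix n n F} (hP : IsUnit P) (a : F) (u : n → F) :
    Nat.card (nondegSymmFiber a (P *ᵥ u)) = Nat.card (nondegSymmFiber a u) := by
  refine le_antisymm ?_ (card_nondegSymmFiber_le_mulVec hP a u)
  simpa [mulVec_mulVec, nonsing_inv_mul P ((isUnit_iff_isUnit_det P).1 hP)] using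
    card_nondegSymmFiber_le_mulVec (isUnit_nonsing_inv_iff.2 hP) a (P *ᵥ u)

lemma card_nondegSymmFiber_zero_single :
    Nat.card (nondegSymmFiber (0 : F) (Pi.single (inl ()) 1 : Unit ⊕ n → F)) =
      q * q ^ Fintype.card n * Nat.card (nondegSymm n F) := by
  let e : nondegSymmFiber (0 : F) (Pi.single (inl ()) 1 : Unit ⊕ n → F) ≃
      F × (n → F) × nondegSymm n F :=
    { toFun D := (D.1 (inl ()) (inl ()), fun j => D.1 (inl ()) (inr j), ⟨D.1.toBlocks₂₂,
        D.2.1.submatrix inr, by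
          have hD := D.2.2
          rwa [← symmBorder_entries_eq D.2.1, isUnit_symmBorder_zero_single_iff] at hD⟩)
      invFun x := ⟨symmBorder x.1 x.2.1 x.2.2, isSymm_symmBorder_iff.2 x.2.2.2.1,
        (isUnit_symmBorder_zero_single_iff _ _ _).2 x.2.2.2.2⟩
      left_inv D := Subtype.ext (symmBorder_entries_eq D.2.1)
      right_inv x := rfl }
  simp [Nat.card_congr e, Nat.card_prod, mul_assoc]

lemma sum_card_nondegSymmFiber_zero :
    ∑ u : Unit ⊕ n → F, Nat.card (nondegSymmFiber 0 u) =
      (q ^ (Fintype.card n + 1) - 1) * (q * q ^ Fintype.card n * Nat.card (nondegSymm n F)) := by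
  classical
  have hconst : ∀ u ∈ Finset.univ.erase (0 : Unit ⊕ n → F),
      Nat.card (nondegSymmFiber 0 u) = q * q ^ Fintype.card n * Nat.card (nondegSymm n F) := by
    intro u hu
    obtain ⟨P, hP, rfl⟩ := exists_isUnit_mulVec_single_eq (inl ()) (Finset.ne_of_mem_erase hu)
    rw [card_nondegSymmFiber_mulVec hP, card_nondegSymmFiber_zero_single]
  rw [← Finset.add_sum_erase _ _ (Finset.mem_univ 0), nondegSymmFiber_zero_zero,
    Nat.card_of_isEmpty, zero_add, Finset.sum_congr rfl hconst, Finset.sum_const,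
    Finset.card_erase_of_mem (Finset.mem_univ _), Finset.card_univ, smul_eq_mul, Fintype.card_fun, Fintype.card_sum, Fintype.card_unit, add_comm, pow_succ']

lemma card_nondegSymm_sum_unit :
    Nat.card (nondegSymm (Unit ⊕ n) F) =
      (q - 1) * (q ^ Fintype.card n * Nat.card (nondegSymm n F)) +
        ∑ u : n → F, Nat.card (nondegSymmFiber 0 u) := by
  classical
  rw [Nat.card_congr nondegSymmEquivSigmaFiber, Nat.card_sigma, Fintype.sum_prod_type,
    ← Finset.add_sum_erase _ _ (Finset.mem_univ 0), add_comm]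
  congr 1
  rw [Finset.sum_congr rfl fun a ha => Finset.sum_congr rfl fun u _ =>
    card_nondegSymmFiber_of_ne_zero (Finset.ne_of_mem_erase ha) u]
  simp [Finset.card_erase_of_mem]

lemma card_nondegSymm_fin_one : Nat.card (nondegSymm (Fin 1) F) = q - 1 := by
  rw [← card_nondegSymm_congr (Fintype.equivOfCardEq (by simp) : Unit ⊕ Fin 0 ≃ Fin 1),
    card_nondegSymm_sum_unit, Fintype.sum_unique, Subsingleton.elim default 0,
    nondegSymmFiber_zero_zero, card_nondegSymm_fin_zero]
  simp

lemma card_nondegSymm_fin_add_two (k : ℕ) :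
    Nat.card (nondegSymm (Fin (k + 2)) F) =
      (q - 1) * (q ^ (k + 1) * Nat.card (nondegSymm (Fin (k + 1)) F)) +
        (q ^ (k + 1) - 1) * (q * q ^ k * Nat.card (nondegSymm (Fin k) F)) := by
  rw [← card_nondegSymm_congr
      (Fintype.equivOfCardEq (by simp; ring) : Unit ⊕ (Unit ⊕ Fin k) ≃ Fin (k + 2)),
    card_nondegSymm_sum_unit, sum_card_nondegSymmFiber_zero,
    card_nondegSymm_congr (Fintype.equivOfCardEq (by simp; ring) : Unit ⊕ Fin k ≃ Fin (k + 1))]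
  simp [add_comm]

open Finset in
lemma card_nondegSymm_fin_two_mul (t : ℕ) :
    (Nat.card (nondegSymm (Fin (2 * t)) F) : ℚ) =
        (q : ℚ) ^ (t * (t + 1)) * ∏ i ∈ range t, ((q : ℚ) ^ (2 * i + 1) - 1) ∧
      (Nat.card (nondegSymm (Fin (2 * t + 1)) F) : ℚ) =
        (q : ℚ) ^ (t * (t + 1)) * ∏ i ∈ range (t + 1), ((q : ℚ) ^ (2 * i + 1) - 1) := by
  have hq : 1 ≤ q := Fintype.card_pos
  have hrec (k : ℕ) : (Nat.card (nondegSymm (Fin (k + 2)) F) : ℚ) =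
      (q - 1) * (q ^ (k + 1) * Nat.card (nondegSymm (Fin (k + 1)) F)) +
        (q ^ (k + 1) - 1) * (q * q ^ k * Nat.card (nondegSymm (Fin k) F)) := by
    rw [card_nondegSymm_fin_add_two]
    push_cast [Nat.cast_sub hq, Nat.cast_sub (Nat.one_le_pow _ _ hq)]
    ring
  induction t with
  | zero =>
    rw [Nat.mul_zero, zero_add, card_nondegSymm_fin_zero, card_nondegSymm_fin_one,
      Nat.cast_sub hq]
    simp
  | succ t ih =>
    have heven : (Nat.card (nondegSymm (Fin (2 * (t + 1))) F) : ℚ) =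
        (q : ℚ) ^ ((t + 1) * (t + 2)) * ∏ i ∈ range (t + 1), ((q : ℚ) ^ (2 * i + 1) - 1) := by
      rw [show 2 * (t + 1) = 2 * t + 2 by ring, hrec, ih.1, ih.2, prod_range_succ]
      ring
    refine ⟨heven, ?_⟩
    rw [show 2 * (t + 1) + 1 = (2 * t + 1) + 2 by ring, hrec,
      show 2 * t + 1 + 1 = 2 * (t + 1) by ring, heven, ih.2, prod_range_succ _ (t + 1)]
    ring

end Recursion

end Matrix

open Matrix Finset in
theorem card_symmetric_matrices_odd_rank_general
    (F : Type) [Field F] [Fintype F]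
    (n s : ℕ) (hs : 2 * s + 1 ≤ n) :
    (Nat.card {A : Matrix (Fin n) (Fin n) F // A.IsSymm ∧ A.rank = 2 * s + 1} : ℚ) =
      (∏ i ∈ Finset.Icc 1 s,
        ((Fintype.card F : ℚ) ^ (2 * i)) / ((Fintype.card F : ℚ) ^ (2 * i) - 1)) *
      ∏ i ∈ Finset.range (2 * s + 1), ((Fintype.card F : ℚ) ^ (n - i) - 1) := by
  have hcount := congrArg (Nat.cast : ℕ → ℚ)
    (card_isSymm_rank_mul_card_GL (F := F) (m := Fin n) (2 * s + 1))
  rw [Nat.cast_mul, Nat.cast_mul, card_GL_field, card_linearIndependent_col (by simpa using hs),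
    Fintype.card_fin, Nat.cast_prod_pow_sub_pow Fintype.card_pos le_rfl,
    Nat.cast_prod_pow_sub_pow Fintype.card_pos hs, prod_range_pow_sub_one_odd,
    (card_nondegSymm_fin_two_mul s).2] at hcount
  set Q : ℚ := (Fintype.card F : ℚ)
  have hQ : 1 < Q := Nat.one_lt_cast.2 Fintype.one_lt_card
  have hQ0 : Q ≠ 0 := (zero_lt_one.trans hQ).ne'
  have hpow (k : ℕ) (hk : k ≠ 0) : Q ^ k - 1 ≠ 0 := sub_ne_zero.2 (one_lt_pow₀ hQ hk).ne'
  have hodd : ∏ i ∈ range (s + 1), (Q ^ (2 * i + 1) - 1) ≠ 0 :=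
    prod_ne_zero_iff.2 fun i _ => hpow _ (by omega)
  have heven : ∏ i ∈ Icc 1 s, (Q ^ (2 * i) - 1) ≠ 0 :=
    prod_ne_zero_iff.2 fun i hi => hpow _ (by have := (mem_Icc.1 hi).1; omega)
  rw [prod_div_distrib, prod_Icc_pow_two_mul, div_mul_eq_mul_div, eq_div_iff heven]
  refine mul_right_cancel₀ (b := Q ^ (∑ i ∈ range (2 * s + 1), i) *
    ∏ i ∈ range (s + 1), (Q ^ (2 * i + 1) - 1)) (mul_ne_zero (pow_ne_zero _ hQ0) hodd) ?_
  linear_combination hcount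

/-- **Counting symmetric matrices of odd rank over a finite field.** Let `F` be a
finite field of odd cardinality `q`. The number of symmetric `n×n` matrices over `F`
of rank `r = 2s+1` (with `2s+1 ≤ n`) equals
`∏_{i=1}^{s} q^{2i}/(q^{2i}−1) · ∏_{i=0}^{2s} (q^{n−i} − 1)`. -/
theorem card_symmetric_matrices_odd_rank
    (F : Type) [Field F] [Fintype F] (hq : Odd (Fintype.card F))
    (n s : ℕ) (hs : 2 * s + 1 ≤ n) :
    (Nat.card {A : Matrix (Fin n) (Fin n) F // A.IsSymm ∧ A.rank = 2 * s + 1} : ℚ) =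
      (∏ i ∈ Finset.Icc 1 s,
        ((Fintype.card F : ℚ) ^ (2 * i)) / ((Fintype.card F : ℚ) ^ (2 * i) - 1)) *
      ∏ i ∈ Finset.range (2 * s + 1), ((Fintype.card F : ℚ) ^ (n - i) - 1) :=
  card_symmetric_matrices_odd_rank_general F n s hs
end
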